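/- arXiv:2006.03137 — 6 statements merged into one kernel-verified Lean document; each statement's English description precedes it below -/
import Mathlib

section
/- For all indices i, j ∈ {1, …, d} one has V_i P V_j = V_j P V_i. Consequently, for every t ∈ [0,1] the operators P^t V_1 P^{1−t}, …, P^t V_d P^{1−t} pairwise commute; that is, the generalized spherical Aluthge transform Δ_t(T) is again a commuting d-tuple. -/
/-!
Substituting `T i = V i * P` into `T i * T j = T j * T i` shows that `A := V i P V j - V j P V i`
vanishes on the range of `P`. It also vanishes on `ker P`, since `∑ (V k)⋆ V k` is the projection
onto `(ker P)ᗮ`, so every `V k` kills `ker P`. For self-adjoint `P` the closure of the range is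
`(ker P)ᗮ`, hence `A = 0`. Finally `P ^ (1 - t) * P ^ t = P`, so the product of two entries of
`Δ_t(T)` is `P ^ t * (V i P V j) * P ^ (1 - t)`, which is symmetric in `i, j`.
-/

open scoped InnerProductSpace InnerProduct

namespace CFC

variable {A : Type*} [PartialOrder A] [Ring A] [StarRing A] [TopologicalSpace A]
  [StarOrderedRing A] [Algebra ℝ A] [ContinuousFunctionalCalculus ℝ A IsSelfAdjoint]
  [NonnegSpectrumClass ℝ A]

lemma rpow_add_of_nonneg (a : A) {x y : ℝ} (hx : 0 ≤ x) (hy : 0 ≤ y) :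
    a ^ (x + y) = a ^ x * a ^ y := by
  simp only [rpow_def]
  rw [← cfc_mul _ _ a (NNReal.continuous_rpow_const hx).continuousOn
    (NNReal.continuous_rpow_const hy).continuousOn]
  exact cfc_congr fun z _ => NNReal.rpow_add_of_nonneg z hx hy

end CFC

lemma commute_sandwich_of_mul_eq {R : Type*} [Semigroup R] {a b p x y : R} (hba : b * a = p)
    (h : x * p * y = y * p * x) : Commute (a * x * b) (a * y * b) := by
  calc a * x * b * (a * y * b) = a * (x * (b * a) * y) * b := by simp only [mul_assoc]
    _ = a * (y * (b * a) * x) * b := by rw [hba, h]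
    _ = a * y * b * (a * x * b) := by simp only [mul_assoc]

namespace ContinuousLinearMap

variable {𝕜 E : Type*} [RCLike 𝕜] [NormedAddCommGroup E] [InnerProductSpace 𝕜 E] [CompleteSpace E]

lemma ker_sum_star_mul_self_le_ker {ι : Type*} [Fintype ι] (V : ι → E →L[𝕜] E) (i : ι) :
    (∑ k, star (V k) * V k).ker ≤ (V i).ker := by
  intro x hx
  have hsum : ∑ k, ‖V k x‖ ^ 2 = 0 := by
    have hinner : ⟪(∑ k, star (V k) * V k) x, x⟫_𝕜 = 0 := by
      rw [show (∑ k, star (V k) * V k) x = 0 from hx, inner_zero_left]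
    simpa [apply_norm_sq_eq_inner_adjoint_left, star_eq_adjoint, sum_inner, map_sum]
      using congr_arg RCLike.re hinner
  have := (Finset.sum_eq_zero_iff_of_nonneg fun k _ => sq_nonneg ‖V k x‖).mp hsum i
    (Finset.mem_univ i)
  simpa using this

lemma eq_zero_of_ker_adjoint_le_of_mul_eq_zero {A P : E →L[𝕜] E} (hker : (P†).ker ≤ A.ker)
    (hAP : A * P = 0) : A = 0 := by
  have hrange : P.range ≤ A.ker := by
    rintro _ ⟨y, rfl⟩
    exact congr($hAP y)
  have horth : (P†).kerᗮ ≤ A.ker := by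
    rw [(P†).orthogonal_ker, adjoint_adjoint]
    exact Submodule.topologicalClosure_minimal _ hrange A.isClosed_ker
  have : CompleteSpace (P†).ker := (P†).isClosed_ker.completeSpace_coe
  have hall : (P†).ker ⊔ (P†).kerᗮ ≤ A.ker := sup_le hker horth
  rw [Submodule.sup_orthogonal_of_hasOrthogonalProjection, top_le_iff] at hall
  exact coe_injective (LinearMap.ker_eq_top.mp hall)

end ContinuousLinearMap

theorem spherical_aluthge_commutes_general
    {H : Type*} [NormedAddCommGroup H] [InnerProductSpace ℂ H] [CompleteSpace H]
    {d : ℕ} (T V : Fin d → H →L[ℂ] H) (P : H →L[ℂ] H)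
    (hcomm : ∀ i j, T i * T j = T j * T i)
    (hPpos : 0 ≤ P)
    (hpolar : ∀ i, T i = V i * P)
    (hproj : ∑ i, star (V i) * V i =
      ((LinearMap.ker (P : H →ₗ[ℂ] H))ᗮ).subtypeL.comp
        (Submodule.orthogonalProjectionOnto (LinearMap.ker (P : H →ₗ[ℂ] H))ᗮ)) :
    (∀ i j, V i * P * V j = V j * P * V i) ∧
      ∀ t : ℝ, 0 ≤ t → t ≤ 1 → ∀ i j,
        (CFC.rpow P t * V i * CFC.rpow P (1 - t)) * (CFC.rpow P t * V j * CFC.rpow P (1 - t)) =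
          (CFC.rpow P t * V j * CFC.rpow P (1 - t)) * (CFC.rpow P t * V i * CFC.rpow P (1 - t)) := by
  have hVker : ∀ i, P.ker ≤ (V i).ker := fun i =>
    calc P.ker ≤ P.kerᗮᗮ := Submodule.le_orthogonal_orthogonal _
      _ = (∑ k, star (V k) * V k).ker := by rw [hproj]; exact (Submodule.ker_starProjection _).symm
      _ ≤ (V i).ker := ContinuousLinearMap.ker_sum_star_mul_self_le_ker V i
  have hVPV : ∀ i j, V i * P * V j = V j * P * V i := by
    intro i j
    refine sub_eq_zero.mp
      (ContinuousLinearMap.eq_zero_of_ker_adjoint_le_of_mul_eq_zero (P := P) ?_ ?_)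
    · intro x hx
      rw [(IsSelfAdjoint.of_nonneg hPpos).adjoint_eq] at hx
      have hi : V i x = 0 := hVker i hx
      have hj : V j x = 0 := hVker j hx
      simp [hi, hj]
    · simpa only [sub_mul, mul_assoc, hpolar, sub_eq_zero] using hcomm i j
  refine ⟨hVPV, fun t ht0 ht1 i j => ?_⟩
  have hsplit : CFC.rpow P (1 - t) * CFC.rpow P t = P := by
    rw [CFC.rpow_eq_pow, CFC.rpow_eq_pow, ← CFC.rpow_add_of_nonneg P (by linarith) ht0,
      sub_add_cancel, CFC.rpow_one P hPpos]
  exact (commute_sandwich_of_mul_eq hsplit (hVPV i j)).eq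

theorem spherical_aluthge_commutes
    {H : Type*} [NormedAddCommGroup H] [InnerProductSpace ℂ H] [CompleteSpace H]
    {d : ℕ} (hd : 1 ≤ d) (T V : Fin d → H →L[ℂ] H) (P : H →L[ℂ] H)
    (hcomm : ∀ i j, T i * T j = T j * T i)
    (hPpos : 0 ≤ P)
    (hP2 : P * P = ∑ i, star (T i) * T i)
    (hpolar : ∀ i, T i = V i * P)
    (hproj : ∑ i, star (V i) * V i =
      ((LinearMap.ker (P : H →ₗ[ℂ] H))ᗮ).subtypeL.comp
        (Submodule.orthogonalProjectionOnto (LinearMap.ker (P : H →ₗ[ℂ] H))ᗮ)) :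
    (∀ i j, V i * P * V j = V j * P * V i) ∧
      ∀ t : ℝ, 0 ≤ t → t ≤ 1 → ∀ i j,
        (CFC.rpow P t * V i * CFC.rpow P (1 - t)) * (CFC.rpow P t * V j * CFC.rpow P (1 - t)) =
          (CFC.rpow P t * V j * CFC.rpow P (1 - t)) * (CFC.rpow P t * V i * CFC.rpow P (1 - t)) :=
  spherical_aluthge_commutes_general T V P hcomm hPpos hpolar hproj
end

section
/- Let 0 < t ≤ 1. If Δ_t(T) = T, i.e. P^t V_i P^{1−t} = T_i for every i ∈ {1, …, d}, then P commutes with V_i for every i (equivalently, P commutes with each T_i); that is, the fixed points of the generalized spherical Aluthge transform are exactly the spherically quasinormal d-tuples. -/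
/-!
Write `Q = P ^ t` and `R = P ^ (1 - t)`, so that `Q * R = P`. The fixed-point equation says
`(Q * Vᵢ - Vᵢ * Q) * R = 0`. The operator `Q * Vᵢ - Vᵢ * Q` also vanishes on `ker R ⊆ ker P`,
since the polar decomposition forces `Vᵢ` to vanish on `ker P` and `Q` maps `ker P` into itself.
As `R` is self-adjoint, `ker R` and the closure of the range of `R` together span `H`, so `Q`
commutes with `Vᵢ`, and hence so does `P = Q ^ t⁻¹`.
-/

open scoped InnerProductSpace InnerProduct

namespace ContinuousLinearMap

variable {𝕜 E F : Type*} [RCLike 𝕜] [NormedAddCommGroup E] [InnerProductSpace 𝕜 E]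
  [CompleteSpace E] [NormedAddCommGroup F] [InnerProductSpace 𝕜 F]

theorem apply_eq_zero_of_sum_adjoint_comp_self_apply_eq_zero [CompleteSpace F] {ι : Type*}
    [Fintype ι] (V : ι → E →L[𝕜] F) {x : E} (hx : (∑ i, (V i)† ∘L V i) x = 0) (i : ι) :
    V i x = 0 := by
  have hsum : ∑ j, ‖V j x‖ ^ 2 = 0 :=
    calc ∑ j, ‖V j x‖ ^ 2 = RCLike.re ⟪(∑ j, (V j)† ∘L V j) x, x⟫_𝕜 := by
          simp only [apply_norm_sq_eq_inner_adjoint_left, sum_apply, sum_inner, map_sum]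
      _ = 0 := by rw [hx, inner_zero_left, map_zero]
  have hi := (Finset.sum_eq_zero_iff_of_nonneg fun j _ => sq_nonneg ‖V j x‖).mp hsum i
    (Finset.mem_univ i)
  simpa using hi

theorem eq_zero_of_comp_eq_zero_of_ker_le {S : E →L[𝕜] F} {R : E →L[𝕜] E}
    (hR : IsSelfAdjoint R) (hSR : S ∘L R = 0) (hker : R.ker ≤ S.ker) : S = 0 := by
  have hrange : R.range.topologicalClosure ≤ S.ker := by
    refine Submodule.topologicalClosure_minimal _ ?_ S.isClosed_ker
    rintro - ⟨x, rfl⟩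
    simpa using congr($hSR x)
  have hortho : R.kerᗮ ≤ S.ker := by
    rwa [orthogonal_ker, ← star_eq_adjoint, hR.star_eq]
  have htop : ⊤ ≤ S.ker := by
    rw [← Submodule.sup_orthogonal_of_hasOrthogonalProjection (K := R.ker)]
    exact sup_le hker hortho
  ext x
  exact htop Submodule.mem_top

end ContinuousLinearMap

section Aluthge

variable {H : Type*} [NormedAddCommGroup H] [InnerProductSpace ℂ H] [CompleteSpace H]

theorem commute_rpow_of_rpow_mul_mul_rpow_eq_mul {P V : H →L[ℂ] H} (hP : 0 ≤ P)
    (hV : P.ker ≤ V.ker) {t : ℝ} (ht0 : 0 ≤ t) (ht1 : t ≤ 1)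
    (hfix : P ^ t * V * P ^ (1 - t) = V * P) : Commute (P ^ t) V := by
  set Q := P ^ t
  set R := P ^ (1 - t)
  have hQR : Q * R = P := by
    rw [← CFC.rpow_add_of_nonneg P ht0 (by linarith), add_sub_cancel, CFC.rpow_one P]
  have hQP : Commute Q P := (Commute.refl P).cfc_nnreal _
  have hker : R.ker ≤ (Q * V - V * Q).ker := by
    intro y hy
    have hRy : R y = 0 := hy
    have hPy : P y = 0 := by rw [← hQR, mul_apply_eq_comp, hRy, map_zero]
    have hPQy : P (Q y) = 0 := by
      rw [← mul_apply_eq_comp, ← hQP.eq, mul_apply_eq_comp, hPy, map_zero]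
    have hVy : V y = 0 := hV hPy
    have hVQy : V (Q y) = 0 := hV hPQy
    simp [hVy, hVQy]
  have hSR : (Q * V - V * Q) ∘L R = 0 := by
    rw [← ContinuousLinearMap.mul_def, sub_mul, hfix, mul_assoc, hQR, sub_self]
  exact sub_eq_zero.mp <| ContinuousLinearMap.eq_zero_of_comp_eq_zero_of_ker_le
    (IsSelfAdjoint.of_nonneg CFC.rpow_nonneg) hSR hker

theorem commute_of_rpow_mul_mul_rpow_eq_mul {P V : H →L[ℂ] H} (hP : 0 ≤ P)
    (hV : P.ker ≤ V.ker) {t : ℝ} (ht0 : 0 < t) (ht1 : t ≤ 1)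
    (hfix : P ^ t * V * P ^ (1 - t) = V * P) : Commute P V := by
  have hPt : (P ^ t) ^ t⁻¹ = P := by
    rw [CFC.rpow_rpow_of_exponent_nonneg P t t⁻¹ ht0.le (inv_nonneg.mpr ht0.le),
      mul_inv_cancel₀ ht0.ne', CFC.rpow_one P]
  rw [← hPt]
  exact (commute_rpow_of_rpow_mul_mul_rpow_eq_mul hP hV ht0.le ht1 hfix).cfc_nnreal _

end Aluthge

theorem fixed_points_of_spherical_aluthge_general
    {H : Type*} [NormedAddCommGroup H] [InnerProductSpace ℂ H] [CompleteSpace H]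
    {d : ℕ} (T V : Fin d → H →L[ℂ] H) (P : H →L[ℂ] H)
    (hPpos : 0 ≤ P)
    (hpolar : ∀ i, T i = V i * P)
    (hproj : ∑ i, star (V i) * V i =
      ((LinearMap.ker (P : H →ₗ[ℂ] H))ᗮ).subtypeL.comp
        (Submodule.orthogonalProjectionOnto (LinearMap.ker (P : H →ₗ[ℂ] H))ᗮ))
    (t : ℝ) (ht0 : 0 < t) (ht1 : t ≤ 1)
    (hfix : ∀ i, CFC.rpow P t * V i * CFC.rpow P (1 - t) = T i) :
    (∀ i, P * V i = V i * P) ∧ (∀ i, P * T i = T i * P) := by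
  have hVker : ∀ i, P.ker ≤ (V i).ker := fun i x hx => by
    refine ContinuousLinearMap.apply_eq_zero_of_sum_adjoint_comp_self_apply_eq_zero V ?_ i
    have hx' : x ∈ (P.kerᗮ)ᗮ := Submodule.le_orthogonal_orthogonal _ hx
    change (∑ i, star (V i) * V i) x = 0
    simp [hproj, Submodule.orthogonalProjectionOnto_apply_of_mem_orthogonal hx']
  have hPV : ∀ i, Commute P (V i) := fun i =>
    commute_of_rpow_mul_mul_rpow_eq_mul hPpos (hVker i) ht0 ht1 ((hfix i).trans (hpolar i))
  refine ⟨fun i => (hPV i).eq, fun i => ?_⟩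
  rw [hpolar i]
  exact ((hPV i).mul_right (Commute.refl P)).eq

/-- For `0 < t ≤ 1`, the fixed points of the generalized spherical Aluthge transform are
the spherically quasinormal tuples: if `Δₜ(T) = T` then `P` commutes with each `Vᵢ`,
equivalently with each `Tᵢ`. -/
theorem fixed_points_of_spherical_aluthge
    {H : Type*} [NormedAddCommGroup H] [InnerProductSpace ℂ H] [CompleteSpace H]
    {d : ℕ} (hd : 1 ≤ d) (T V : Fin d → H →L[ℂ] H) (P : H →L[ℂ] H)
    (hcomm : ∀ i j, T i * T j = T j * T i)
    (hPpos : 0 ≤ P)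
    (hP2 : P * P = ∑ i, star (T i) * T i)
    (hpolar : ∀ i, T i = V i * P)
    (hproj : ∑ i, star (V i) * V i =
      ((LinearMap.ker (P : H →ₗ[ℂ] H))ᗮ).subtypeL.comp
        (Submodule.orthogonalProjectionOnto (LinearMap.ker (P : H →ₗ[ℂ] H))ᗮ))
    (t : ℝ) (ht0 : 0 < t) (ht1 : t ≤ 1)
    (hfix : ∀ i, CFC.rpow P t * V i * CFC.rpow P (1 - t) = T i) :
    (∀ i, P * V i = V i * P) ∧ (∀ i, P * T i = T i * P) :=
  fixed_points_of_spherical_aluthge_general T V P hPpos hpolar hproj t ht0 ht1 hfix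
end

section
/- Let 0 < t < 1. The following statements are equivalent: (i) the tuple T is left invertible; (ii) the positive operator P is invertible; (iii) the tuple Δ_t(T) = (P^t V_1 P^{1−t}, …, P^t V_d P^{1−t}) is left invertible. -/
/-!
If `P` is invertible then `ker P = 0`, so `∑ Vᵢ* Vᵢ = 1` and
`(P^{t-1} Vᵢ* P^{-t})ᵢ` is a left inverse of `Δₜ(T) = (P^t Vᵢ P^{1-t})ᵢ`
(with `t = 0` this is the left inverse `(P⁻¹ Vᵢ*)ᵢ` of `T = (Vᵢ P)ᵢ`).
Conversely, a left inverse `(Aᵢ)` of `(Bᵢ Y)ᵢ` makes `∑ Aᵢ Bᵢ` a left inverse of `Y`; for the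
selfadjoint `Y = P` or `Y = P^{1-t}` this forces `Y` to be invertible, and
`P^{1-t}` is invertible only if `P` is.
-/

lemma IsSelfAdjoint.isUnit_of_mul_eq_one {A : Type*} [Monoid A] [StarMul A] {a b : A}
    (ha : IsSelfAdjoint a) (h : b * a = 1) : IsUnit a :=
  isUnit_iff_exists_and_exists.mpr
    ⟨⟨star b, by simpa [ha.star_eq] using congrArg star h⟩, ⟨b, h⟩⟩

lemma IsSelfAdjoint.isUnit_of_sum_mul_mul_eq_one {A ι : Type*} [Ring A] [StarMul A]
    {s : Finset ι} {a b : ι → A} {y : A} (hy : IsSelfAdjoint y)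
    (h : ∑ i ∈ s, a i * (b i * y) = 1) : IsUnit y :=
  hy.isUnit_of_mul_eq_one (b := ∑ i ∈ s, a i * b i) (by simp_rw [Finset.sum_mul, mul_assoc, h])

lemma exists_sum_mul_eq_one_of_sum_star_mul_self_eq_one {A ι : Type*} [Ring A] [StarMul A]
    [Fintype ι] {v : ι → A} (hv : ∑ i, star (v i) * v i = 1) (x y : Aˣ) :
    ∃ a : ι → A, ∑ i, a i * (x * v i * y) = 1 := by
  refine ⟨fun i => ↑y⁻¹ * star (v i) * ↑x⁻¹, ?_⟩
  calc ∑ i, ↑y⁻¹ * star (v i) * ↑x⁻¹ * (x * v i * y)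
      = ↑y⁻¹ * (∑ i, star (v i) * v i) * y := by
        simp only [Finset.mul_sum, Finset.sum_mul, mul_assoc, Units.inv_mul_cancel_left]
    _ = 1 := by simp [hv]

lemma ContinuousLinearMap.starProjection_orthogonal_ker_eq_one {𝕜 E : Type*} [RCLike 𝕜]
    [NormedAddCommGroup E] [InnerProductSpace 𝕜 E] [CompleteSpace E] {f : E →L[𝕜] E}
    (hf : IsUnit f) : (LinearMap.ker (f : E →ₗ[𝕜] E))ᗮ.starProjection = 1 := by
  have hker : LinearMap.ker (f : E →ₗ[𝕜] E) = ⊥ :=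
    LinearMap.ker_eq_bot.mpr (ContinuousLinearMap.isUnit_iff_bijective.mp hf).injective
  simp only [hker, Submodule.bot_orthogonal_eq_top, Submodule.starProjection_top']

theorem left_invertibility_of_spherical_aluthge_general
    {H : Type*} [NormedAddCommGroup H] [InnerProductSpace ℂ H] [CompleteSpace H]
    {d : ℕ} (T V : Fin d → H →L[ℂ] H) (P : H →L[ℂ] H)
    (hPpos : 0 ≤ P)
    (hpolar : ∀ i, T i = V i * P)
    (hproj : ∑ i, star (V i) * V i =
      ((LinearMap.ker (P : H →ₗ[ℂ] H))ᗮ).subtypeL.comp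
        (Submodule.orthogonalProjectionOnto (LinearMap.ker (P : H →ₗ[ℂ] H))ᗮ))
    (t : ℝ) (ht1 : t < 1) :
    ((∃ A : Fin d → H →L[ℂ] H, ∑ i, A i * T i = 1) ↔ IsUnit P) ∧
    (IsUnit P ↔
      ∃ A : Fin d → H →L[ℂ] H,
        ∑ i, A i * (CFC.rpow P t * V i * CFC.rpow P (1 - t)) = 1) := by
  have hV (hP : IsUnit P) : ∑ i, star (V i) * V i = 1 :=
    hproj.trans (ContinuousLinearMap.starProjection_orthogonal_ker_eq_one hP)
  simp_rw [hpolar]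
  refine ⟨⟨fun ⟨A, hA⟩ => hPpos.isSelfAdjoint.isUnit_of_sum_mul_mul_eq_one hA, fun hP => ?_⟩,
    ⟨fun hP => ?_, fun ⟨A, hA⟩ => ?_⟩⟩
  · simpa using exists_sum_mul_eq_one_of_sum_star_mul_self_eq_one (hV hP) 1 hP.unit
  · exact exists_sum_mul_eq_one_of_sum_star_mul_self_eq_one (hV hP)
      (hP.cfcRpow t).unit (hP.cfcRpow (1 - t)).unit
  · have hQ : IsUnit (CFC.rpow P (1 - t)) :=
      (CFC.rpow_nonneg (a := P)).isSelfAdjoint.isUnit_of_sum_mul_mul_eq_one hA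
    exact (CFC.isUnit_rpow_iff P (1 - t) (by linarith)).mp hQ

/-- For `0 < t < 1`: `T` is left invertible ⟺ `P` is invertible ⟺ `Δₜ(T)` is left
invertible. -/
theorem left_invertibility_of_spherical_aluthge
    {H : Type*} [NormedAddCommGroup H] [InnerProductSpace ℂ H] [CompleteSpace H]
    {d : ℕ} (hd : 1 ≤ d) (T V : Fin d → H →L[ℂ] H) (P : H →L[ℂ] H)
    (hcomm : ∀ i j, T i * T j = T j * T i)
    (hPpos : 0 ≤ P)
    (hP2 : P * P = ∑ i, star (T i) * T i)
    (hpolar : ∀ i, T i = V i * P)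
    (hproj : ∑ i, star (V i) * V i =
      ((LinearMap.ker (P : H →ₗ[ℂ] H))ᗮ).subtypeL.comp
        (Submodule.orthogonalProjectionOnto (LinearMap.ker (P : H →ₗ[ℂ] H))ᗮ))
    (t : ℝ) (ht0 : 0 < t) (ht1 : t < 1) :
    ((∃ A : Fin d → H →L[ℂ] H, ∑ i, A i * T i = 1) ↔ IsUnit P) ∧
    (IsUnit P ↔
      ∃ A : Fin d → H →L[ℂ] H,
        ∑ i, A i * (CFC.rpow P t * V i * CFC.rpow P (1 - t)) = 1) :=
  left_invertibility_of_spherical_aluthge_general T V P hPpos hpolar hproj t ht1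
end

section
/- Let 0 < t ≤ 1. The tuple T is Harte invertible (both left and right invertible) if and only if the tuple Δ_t(T) = (P^t V_1 P^{1−t}, …, P^t V_d P^{1−t}) is Harte invertible. -/
/-!
Either side of the equivalence forces `P` to be invertible. A left inverse `A` of `T` gives
`(∑ A i * V i) * P = 1`, a right inverse `B` of `Δₜ(T)` gives
`P ^ t * (∑ V i * P ^ (1 - t) * B i) = 1`, and a self-adjoint element with a one-sided inverse
is invertible; since `t ≠ 0`, invertibility of `P ^ t` is that of `P`. Once `P` is invertible,
`P ^ (1 - t) = P * P ^ (-t)`, so `Δₜ(T) i = P ^ t * T i * (P ^ t)⁻¹`: the tuple `Δₜ(T)` is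
the image of `T` under an inner automorphism, and ring isomorphisms preserve left and right
invertibility of tuples.
-/

theorem IsSelfAdjoint.isUnit_of_mul_eq_one_left {R : Type*} [Monoid R] [StarMul R] {x y : R}
    (hx : IsSelfAdjoint x) (h : y * x = 1) : IsUnit x := by
  have h' : x * star y = 1 := by simpa [hx.star_eq] using congrArg star h
  exact isUnit_iff_exists_and_exists.mpr ⟨⟨star y, h'⟩, ⟨y, h⟩⟩

theorem IsSelfAdjoint.isUnit_of_mul_eq_one_right {R : Type*} [Monoid R] [StarMul R] {x y : R}
    (hx : IsSelfAdjoint x) (h : x * y = 1) : IsUnit x :=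
  hx.isUnit_of_mul_eq_one_left (y := star y) (by simpa [hx.star_eq] using congrArg star h)

section Tuple

variable {ι R R' : Type*} [Fintype ι] [Semiring R] [Semiring R']

def IsLeftInvertibleTuple (S : ι → R) : Prop := ∃ A : ι → R, ∑ i, A i * S i = 1

def IsRightInvertibleTuple (S : ι → R) : Prop := ∃ B : ι → R, ∑ i, S i * B i = 1

def IsHarteInvertible (S : ι → R) : Prop := IsLeftInvertibleTuple S ∧ IsRightInvertibleTuple S

variable {F : Type*} [FunLike F R R'] [RingHomClass F R R'] {S : ι → R}

theorem IsLeftInvertibleTuple.map (f : F) (h : IsLeftInvertibleTuple S) :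
    IsLeftInvertibleTuple (f ∘ S) := by
  obtain ⟨A, hA⟩ := h
  exact ⟨f ∘ A, by simp [← map_mul, ← map_sum, hA]⟩

theorem IsRightInvertibleTuple.map (f : F) (h : IsRightInvertibleTuple S) :
    IsRightInvertibleTuple (f ∘ S) := by
  obtain ⟨B, hB⟩ := h
  exact ⟨f ∘ B, by simp [← map_mul, ← map_sum, hB]⟩

theorem IsHarteInvertible.map (f : F) (h : IsHarteInvertible S) : IsHarteInvertible (f ∘ S) :=
  ⟨h.1.map f, h.2.map f⟩

end Tuple

theorem isHarteInvertible_conj_iff {ι R : Type*} [Fintype ι] [Ring R] (u : Rˣ) (S : ι → R) :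
    IsHarteInvertible (fun i ↦ u * S i * ↑u⁻¹) ↔ IsHarteInvertible S := by
  let e := MulSemiringAction.toRingEquiv (ConjAct Rˣ) R (ConjAct.toConjAct u)
  have he : (fun i ↦ u * S i * ↑u⁻¹) = e ∘ S := by
    funext i
    simp [e, ConjAct.units_smul_def]
  rw [he]
  exact ⟨fun h ↦ by simpa [Function.comp_def] using h.map e.symm, fun h ↦ h.map e⟩

theorem isUnit_of_isLeftInvertibleTuple_polar {ι R : Type*} [Fintype ι] [Semiring R] [StarMul R]
    {T V : ι → R} {P : R} (hP : IsSelfAdjoint P) (hpolar : ∀ i, T i = V i * P)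
    (hT : IsLeftInvertibleTuple T) : IsUnit P := by
  obtain ⟨B, hB⟩ := hT
  refine hP.isUnit_of_mul_eq_one_left (y := ∑ i, B i * V i) ?_
  simpa [Finset.sum_mul, hpolar, mul_assoc] using hB

section Aluthge

variable {ι A : Type*} [PartialOrder A] [Ring A] [StarRing A] [TopologicalSpace A]
  [StarOrderedRing A] [Algebra ℝ A] [ContinuousFunctionalCalculus ℝ A IsSelfAdjoint]
  [NonnegSpectrumClass ℝ A]

noncomputable def sphericalAluthge (P : A) (V : ι → A) (t : ℝ) : ι → A :=
  fun i ↦ P ^ t * V i * P ^ (1 - t)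

variable {T V : ι → A} {P : A}

theorem isUnit_of_isRightInvertibleTuple_sphericalAluthge [Fintype ι] (hP : 0 ≤ P) {t : ℝ}
    (ht : t ≠ 0) (h : IsRightInvertibleTuple (sphericalAluthge P V t)) : IsUnit P := by
  obtain ⟨B, hB⟩ := h
  have hPt : IsUnit (P ^ t) := by
    refine (IsSelfAdjoint.of_nonneg CFC.rpow_nonneg).isUnit_of_mul_eq_one_right
      (y := ∑ i, V i * P ^ (1 - t) * B i) ?_
    simpa [sphericalAluthge, Finset.mul_sum, mul_assoc] using hB
  exact (CFC.isUnit_rpow_iff P t ht).mp hPt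

theorem sphericalAluthge_eq_conj (P : Aˣ) (hP : 0 ≤ (P : A)) (hpolar : ∀ i, T i = V i * P)
    (t : ℝ) :
    sphericalAluthge (P : A) V t = fun i ↦ ↑(P.cfcRpow t) * T i * ↑(P.cfcRpow t)⁻¹ := by
  funext i
  rw [sphericalAluthge, hpolar, sub_eq_add_neg, CFC.rpow_add P.isUnit, CFC.rpow_one _ hP]
  simp [mul_assoc]

theorem isHarteInvertible_sphericalAluthge_iff [Fintype ι] (hP : 0 ≤ P)
    (hpolar : ∀ i, T i = V i * P) {t : ℝ} (ht : t ≠ 0) :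
    IsHarteInvertible (sphericalAluthge P V t) ↔ IsHarteInvertible T := by
  suffices hunit :
      IsUnit P → (IsHarteInvertible (sphericalAluthge P V t) ↔ IsHarteInvertible T) by
    exact ⟨fun h ↦ (hunit (isUnit_of_isRightInvertibleTuple_sphericalAluthge hP ht h.2)).mp h,
      fun h ↦ (hunit (isUnit_of_isLeftInvertibleTuple_polar (.of_nonneg hP) hpolar h.1)).mpr h⟩
  rintro ⟨P, rfl⟩
  rw [sphericalAluthge_eq_conj P hP hpolar, isHarteInvertible_conj_iff]

end Aluthge

theorem harte_invertibility_of_spherical_aluthge_general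
    {H : Type*} [NormedAddCommGroup H] [InnerProductSpace ℂ H] [CompleteSpace H]
    {d : ℕ} (T V : Fin d → H →L[ℂ] H) (P : H →L[ℂ] H)
    (hPpos : 0 ≤ P)
    (hpolar : ∀ i, T i = V i * P)
    (t : ℝ) (ht0 : 0 < t) :
    ((∃ A : Fin d → H →L[ℂ] H, ∑ i, A i * T i = 1) ∧
      (∃ B : Fin d → H →L[ℂ] H, ∑ i, T i * B i = 1)) ↔
    ((∃ A : Fin d → H →L[ℂ] H,
        ∑ i, A i * (CFC.rpow P t * V i * CFC.rpow P (1 - t)) = 1) ∧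
      (∃ B : Fin d → H →L[ℂ] H,
        ∑ i, (CFC.rpow P t * V i * CFC.rpow P (1 - t)) * B i = 1)) :=
  (isHarteInvertible_sphericalAluthge_iff hPpos hpolar ht0.ne').symm

/-- For `0 < t ≤ 1`: `T` is Harte invertible iff `Δₜ(T)` is Harte invertible. -/
theorem harte_invertibility_of_spherical_aluthge
    {H : Type*} [NormedAddCommGroup H] [InnerProductSpace ℂ H] [CompleteSpace H]
    {d : ℕ} (hd : 1 ≤ d) (T V : Fin d → H →L[ℂ] H) (P : H →L[ℂ] H)
    (hcomm : ∀ i j, T i * T j = T j * T i)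
    (hPpos : 0 ≤ P)
    (hP2 : P * P = ∑ i, star (T i) * T i)
    (hpolar : ∀ i, T i = V i * P)
    (hproj : ∑ i, star (V i) * V i =
      ((LinearMap.ker (P : H →ₗ[ℂ] H))ᗮ).subtypeL.comp
        (Submodule.orthogonalProjectionOnto (LinearMap.ker (P : H →ₗ[ℂ] H))ᗮ))
    (t : ℝ) (ht0 : 0 < t) (ht1 : t ≤ 1) :
    ((∃ A : Fin d → H →L[ℂ] H, ∑ i, A i * T i = 1) ∧
      (∃ B : Fin d → H →L[ℂ] H, ∑ i, T i * B i = 1)) ↔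
    ((∃ A : Fin d → H →L[ℂ] H,
        ∑ i, A i * (CFC.rpow P t * V i * CFC.rpow P (1 - t)) = 1) ∧
      (∃ B : Fin d → H →L[ℂ] H,
        ∑ i, (CFC.rpow P t * V i * CFC.rpow P (1 - t)) * B i = 1)) :=
  harte_invertibility_of_spherical_aluthge_general T V P hPpos hpolar t ht0
end

section
/- Let 0 < t ≤ 1. If the tuple Δ_t(T) = (P^t V_1 P^{1−t}, …, P^t V_d P^{1−t}) is right Fredholm, then the positive operator P is invertible modulo compact operators, and moreover the tuple T is right Fredholm. -/
/-!
Put `A = P^t` and `D = ∑ i, V i * P^(1-t) * B i`, so that the hypothesis reads `A * D = 1` in the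
Calkin algebra. Adjoints of compact operators are compact (Schauder) and `A` is self-adjoint, so
also `star D * A = 1`; hence `A` is invertible in the Calkin algebra, with inverse `D`. Choosing
`n` with `s = n t - 1 > 0`, the unit `A ^ n = P^(nt)` factors as `P * P^s = P^s * P`, so `P` is
invertible modulo compacts; if `S` is an essential inverse, `T i = V i * P` gives
`∑ i, T i * (S * P^(1-t) * B i * A) = D * A = 1` modulo compacts.
-/

open Metric Set

theorem TotallyBounded.image_of_dist_sq_le {α β γ : Type*} [PseudoMetricSpace β]
    [PseudoMetricSpace γ] {f : α → β} {g : α → γ} {s : Set α} {C : ℝ}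
    (hg : TotallyBounded (g '' s))
    (hfg : ∀ x ∈ s, ∀ y ∈ s, dist (f x) (f y) ^ 2 ≤ C * dist (g x) (g y)) :
    TotallyBounded (f '' s) := by
  rw [Metric.totallyBounded_iff]
  intro ε hε
  obtain ⟨u, hus, hu, hcover⟩ :=
    finite_approx_of_totallyBounded hg (ε ^ 2 / (|C| + 1)) (by positivity)
  obtain ⟨t, hts, ht, rfl⟩ := hu.exists_subset_finite_image_eq hus
  refine ⟨f '' t, ht.image f, ?_⟩
  rintro _ ⟨x, hx, rfl⟩
  obtain ⟨y, hy, hxy⟩ : ∃ y ∈ t, dist (g x) (g y) < ε ^ 2 / (|C| + 1) := by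
    simpa using hcover (mem_image_of_mem g hx)
  refine mem_biUnion (mem_image_of_mem f hy) (mem_ball.2 ?_)
  have hsq : dist (f x) (f y) ^ 2 < ε ^ 2 :=
    calc dist (f x) (f y) ^ 2 ≤ C * dist (g x) (g y) := hfg x hx y (hts hy)
      _ ≤ (|C| + 1) * dist (g x) (g y) := by
          gcongr; exact le_add_of_le_of_nonneg (le_abs_self C) zero_le_one
      _ < (|C| + 1) * (ε ^ 2 / (|C| + 1)) := by gcongr
      _ = ε ^ 2 := by field_simp
  exact lt_of_pow_lt_pow_left₀ 2 hε.le hsq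

section Adjoint

variable {𝕜 E F : Type*} [RCLike 𝕜] [NormedAddCommGroup E] [InnerProductSpace 𝕜 E]
  [CompleteSpace E] [NormedAddCommGroup F] [InnerProductSpace 𝕜 F] [CompleteSpace F]

open ContinuousLinearMap in
theorem ContinuousLinearMap.norm_adjoint_apply_sq_le (K : E →L[𝕜] F) (y : F) :
    ‖adjoint K y‖ ^ 2 ≤ ‖y‖ * ‖K (adjoint K y)‖ :=
  calc ‖adjoint K y‖ ^ 2 = RCLike.re (inner 𝕜 (K (adjoint K y)) y) := by
        rw [apply_norm_sq_eq_inner_adjoint_left, adjoint_adjoint]; rfl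
    _ ≤ ‖inner 𝕜 (K (adjoint K y)) y‖ := RCLike.re_le_norm _
    _ ≤ ‖y‖ * ‖K (adjoint K y)‖ := by rw [mul_comm]; exact norm_inner_le_norm _ _

theorem IsCompactOperator.adjoint {K : E →L[𝕜] F} (hK : IsCompactOperator K) :
    IsCompactOperator (ContinuousLinearMap.adjoint K) := by
  set A := ContinuousLinearMap.adjoint K
  have hKA : TotallyBounded ((K ∘ A) '' closedBall 0 1) := by
    have hL : IsCompactOperator ((K ∘L A : F →L[𝕜] F) : F →ₗ[𝕜] F) := hK.comp_clm A
    exact (hL.isCompact_closure_image_closedBall 1).totallyBounded.subset subset_closure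
  have hA : TotallyBounded (A '' closedBall 0 1) := by
    refine hKA.image_of_dist_sq_le (C := 2) fun x hx y hy => ?_
    have hxy : ‖x - y‖ ≤ 2 := by
      have := norm_sub_le x y
      rw [mem_closedBall_zero_iff] at hx hy
      linarith
    calc dist (A x) (A y) ^ 2 = ‖A (x - y)‖ ^ 2 := by rw [dist_eq_norm, map_sub]
      _ ≤ ‖x - y‖ * ‖K (A (x - y))‖ := K.norm_adjoint_apply_sq_le _
      _ ≤ 2 * dist ((K ∘ A) x) ((K ∘ A) y) := by
        rw [dist_eq_norm, Function.comp_apply, Function.comp_apply, ← map_sub, ← map_sub]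
        gcongr
  exact (isCompactOperator_iff_isCompact_closure_image_closedBall (A : F →ₗ[𝕜] E) one_pos).2
    (hA.closure.isCompact_of_isClosed isClosed_closure)

end Adjoint

section CompactIdeal

variable (𝕜 E : Type*) [NontriviallyNormedField 𝕜] [NormedAddCommGroup E] [NormedSpace 𝕜 E]

def compactOperatorIdeal : Ideal (E →L[𝕜] E) where
  carrier := {T | IsCompactOperator T}
  add_mem' hS hT := hS.add hT
  zero_mem' := isCompactOperator_zero
  smul_mem' S _ hT := hT.clm_comp S

instance : (compactOperatorIdeal 𝕜 E).IsTwoSided := ⟨fun S hT => hT.comp_clm S⟩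

variable {𝕜 E}

theorem mem_compactOperatorIdeal {T : E →L[𝕜] E} :
    T ∈ compactOperatorIdeal 𝕜 E ↔ IsCompactOperator T := Iff.rfl

theorem mk_compactOperatorIdeal_eq_one_iff {T : E →L[𝕜] E} :
    Ideal.Quotient.mk (compactOperatorIdeal 𝕜 E) T = 1 ↔
      ∃ K : E →L[𝕜] E, IsCompactOperator K ∧ T = 1 + K := by
  rw [← map_one (Ideal.Quotient.mk _), Ideal.Quotient.eq, mem_compactOperatorIdeal]
  exact ⟨fun h => ⟨T - 1, h, by abel⟩, by rintro ⟨K, hK, rfl⟩; simpa using hK⟩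

theorem exists_mul_eq_one_add_of_isUnit_mk {T : E →L[𝕜] E}
    (h : IsUnit (Ideal.Quotient.mk (compactOperatorIdeal 𝕜 E) T)) :
    ∃ S K K' : E →L[𝕜] E, IsCompactOperator K ∧ IsCompactOperator K' ∧
      S * T = 1 + K ∧ T * S = 1 + K' := by
  obtain ⟨S, hS⟩ := Ideal.Quotient.mk_surjective (h.unit⁻¹ : ((E →L[𝕜] E) ⧸ _)ˣ).val
  obtain ⟨K, hK, hST⟩ := (mk_compactOperatorIdeal_eq_one_iff (T := S * T)).1
    (by rw [map_mul, hS, h.val_inv_mul])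
  obtain ⟨K', hK', hTS⟩ := (mk_compactOperatorIdeal_eq_one_iff (T := T * S)).1
    (by rw [map_mul, hS, h.mul_val_inv])
  exact ⟨S, K, K', hK, hK', hST, hTS⟩

end CompactIdeal

section Star

variable {𝕜 E : Type*} [RCLike 𝕜] [NormedAddCommGroup E] [InnerProductSpace 𝕜 E]
  [CompleteSpace E]

theorem mk_compactOperatorIdeal_star_eq_one {T : E →L[𝕜] E}
    (h : Ideal.Quotient.mk (compactOperatorIdeal 𝕜 E) T = 1) :
    Ideal.Quotient.mk (compactOperatorIdeal 𝕜 E) (star T) = 1 := by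
  rw [← map_one (Ideal.Quotient.mk _), Ideal.Quotient.eq, mem_compactOperatorIdeal] at h ⊢
  have hstar : star T - 1 = ContinuousLinearMap.adjoint (T - 1) := by
    rw [← ContinuousLinearMap.star_eq_adjoint, star_sub, star_one]
  rw [hstar]
  exact h.adjoint

theorem mk_compactOperatorIdeal_mul_eq_one_symm {A D : E →L[𝕜] E} (hA : IsSelfAdjoint A)
    (h : Ideal.Quotient.mk (compactOperatorIdeal 𝕜 E) A *
      Ideal.Quotient.mk (compactOperatorIdeal 𝕜 E) D = 1) :
    Ideal.Quotient.mk (compactOperatorIdeal 𝕜 E) D *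
      Ideal.Quotient.mk (compactOperatorIdeal 𝕜 E) A = 1 := by
  have hstar := mk_compactOperatorIdeal_star_eq_one (T := A * D) (by rwa [map_mul])
  rw [star_mul, hA.star_eq, map_mul] at hstar
  rwa [left_inv_eq_right_inv hstar h] at hstar

end Star

section Rpow

open CFC

variable {A : Type*} [PartialOrder A] [Ring A] [StarRing A] [TopologicalSpace A]
  [StarOrderedRing A] [Algebra ℝ A] [ContinuousFunctionalCalculus ℝ A IsSelfAdjoint]
  [NonnegSpectrumClass ℝ A]

theorem CFC.rpow_add_of_pos (a : A) {x y : ℝ} (hx : 0 < x) (hy : 0 < y) :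
    a ^ (x + y) = a ^ x * a ^ y := by
  simp only [rpow_def]
  rw [← cfc_mul _ _ a (NNReal.continuous_rpow_const hx.le).continuousOn
    (NNReal.continuous_rpow_const hy.le).continuousOn]
  exact cfc_congr fun z _ => NNReal.rpow_add' (add_pos hx hy).ne' z

theorem isUnit_of_isUnit_map_rpow [IsSemitopologicalRing A] [T2Space A] {R : Type*} [Ring R]
    (f : A →+* R) {a : A} (ha : 0 ≤ a) {t : ℝ} (ht : 0 < t) (h : IsUnit (f (a ^ t))) :
    IsUnit (f a) := by
  obtain ⟨n, hn⟩ := exists_nat_gt (1 / t)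
  set s : ℝ := n * t - 1
  have hs : 0 < s := sub_pos.2 ((div_lt_iff₀ ht).1 hn)
  have hpow : (a ^ t) ^ n = a ^ s * a :=
    calc (a ^ t) ^ n = a ^ (s + 1) := by
          rw [← rpow_natCast _ n, rpow_rpow_of_exponent_nonneg a t n ht.le n.cast_nonneg,
            mul_comm]
          exact congrArg (a ^ ·) (sub_add_cancel _ _).symm
      _ = a ^ s * a := by rw [rpow_add_of_pos a hs one_pos, rpow_one a]
  have hcomm : Commute (a ^ s) a := by
    nth_rw 2 [← rpow_one a]
    rw [commute_iff_eq, ← rpow_add_of_pos a hs one_pos, ← rpow_add_of_pos a one_pos hs,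
      add_comm]
  have hunit : IsUnit (f (a ^ s) * f a) := by
    rw [← map_mul, ← hpow, map_pow]
    exact h.pow n
  exact ((hcomm.map f).isUnit_mul_iff.1 hunit).2

end Rpow


theorem right_fredholmness_of_spherical_aluthge_general
    {H : Type*} [NormedAddCommGroup H] [InnerProductSpace ℂ H] [CompleteSpace H]
    {d : ℕ} (T V : Fin d → H →L[ℂ] H) (P : H →L[ℂ] H)
    (hPpos : 0 ≤ P)
    (hpolar : ∀ i, T i = V i * P)
    (t : ℝ) (ht0 : 0 < t)
    (hright : ∃ B : Fin d → H →L[ℂ] H, ∃ K : H →L[ℂ] H, IsCompactOperator ⇑K ∧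
      ∑ i, (CFC.rpow P t * V i * CFC.rpow P (1 - t)) * B i = 1 + K) :
    (∃ S K K' : H →L[ℂ] H, IsCompactOperator ⇑K ∧ IsCompactOperator ⇑K' ∧
      S * P = 1 + K ∧ P * S = 1 + K') ∧
    (∃ B : Fin d → H →L[ℂ] H, ∃ K : H →L[ℂ] H, IsCompactOperator ⇑K ∧
      ∑ i, T i * B i = 1 + K) := by
  obtain ⟨B, hB⟩ := hright
  set π := Ideal.Quotient.mk (compactOperatorIdeal ℂ H)
  set A := CFC.rpow P t
  set D := ∑ i, V i * CFC.rpow P (1 - t) * B i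
  have hAD : π A * π D = 1 := by
    rw [← map_mul, mk_compactOperatorIdeal_eq_one_iff, Finset.mul_sum]
    simpa only [mul_assoc] using hB
  have hDA : π D * π A = 1 :=
    mk_compactOperatorIdeal_mul_eq_one_symm (IsSelfAdjoint.of_nonneg CFC.rpow_nonneg) hAD
  have hP : IsUnit (π P) :=
    isUnit_of_isUnit_map_rpow π hPpos ht0 (isUnit_iff_exists.2 ⟨π D, hAD, hDA⟩)
  refine ⟨exists_mul_eq_one_add_of_isUnit_mk hP, ?_⟩
  obtain ⟨S, hS⟩ := Ideal.Quotient.mk_surjective (hP.unit⁻¹ : ((H →L[ℂ] H) ⧸ _)ˣ).val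
  refine ⟨fun i => S * (CFC.rpow P (1 - t) * B i * A), mk_compactOperatorIdeal_eq_one_iff.1 ?_⟩
  calc π (∑ i, T i * (S * (CFC.rpow P (1 - t) * B i * A)))
      = ∑ i, π (V i) * (π P * π S) * π (CFC.rpow P (1 - t) * B i * A) := by
        simp only [map_sum, map_mul, hpolar, mul_assoc]
    _ = π D * π A := by
        rw [hS, hP.mul_val_inv, ← map_mul]
        simp only [mul_one, ← map_mul, ← map_sum, D, Finset.sum_mul, mul_assoc]
    _ = 1 := hDA

/-- For `0 < t ≤ 1`: if `Δₜ(T)` is right Fredholm, then `P` is invertible modulo compact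
operators and `T` is right Fredholm. -/
theorem right_fredholmness_of_spherical_aluthge
    {H : Type*} [NormedAddCommGroup H] [InnerProductSpace ℂ H] [CompleteSpace H]
    {d : ℕ} (hd : 1 ≤ d) (T V : Fin d → H →L[ℂ] H) (P : H →L[ℂ] H)
    (hcomm : ∀ i j, T i * T j = T j * T i)
    (hPpos : 0 ≤ P)
    (hP2 : P * P = ∑ i, star (T i) * T i)
    (hpolar : ∀ i, T i = V i * P)
    (hproj : ∑ i, star (V i) * V i =
      ((LinearMap.ker (P : H →ₗ[ℂ] H))ᗮ).subtypeL.comp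
        (Submodule.orthogonalProjectionOnto (LinearMap.ker (P : H →ₗ[ℂ] H))ᗮ))
    (t : ℝ) (ht0 : 0 < t) (ht1 : t ≤ 1)
    (hright : ∃ B : Fin d → H →L[ℂ] H, ∃ K : H →L[ℂ] H, IsCompactOperator ⇑K ∧
      ∑ i, (CFC.rpow P t * V i * CFC.rpow P (1 - t)) * B i = 1 + K) :
    (∃ S K K' : H →L[ℂ] H, IsCompactOperator ⇑K ∧ IsCompactOperator ⇑K' ∧
      S * P = 1 + K ∧ P * S = 1 + K') ∧
    (∃ B : Fin d → H →L[ℂ] H, ∃ K : H →L[ℂ] H, IsCompactOperator ⇑K ∧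
      ∑ i, T i * B i = 1 + K) :=
  right_fredholmness_of_spherical_aluthge_general T V P hPpos hpolar t ht0 hright
end

section
/- Let 0 < t ≤ 1. Then ‖Δ_t(T)‖₂ ≤ ‖T‖₂; that is, ‖Σ_{i=1}^{d} (P^t V_i P^{1−t})^* (P^t V_i P^{1−t})‖ ≤ ‖T_1^*T_1 + ⋯ + T_d^*T_d‖ = ‖P‖². -/
/-!
With `a = Pᵗ` and `b = P¹⁻ᵗ`, the C*-inequality `a⋆a ≤ ‖a‖²` and `∑ Vᵢ⋆Vᵢ ≤ 1` (an orthogonal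
projection) give `∑ (a Vᵢ b)⋆(a Vᵢ b) = b⋆(∑ Vᵢ⋆ a⋆a Vᵢ) b ≤ ‖a‖² b⋆b`, hence the norm is at most
`‖a‖²‖b‖² ≤ ‖P‖^{2t} ‖P‖^{2(1-t)} = ‖P‖²`, while `‖∑ Tᵢ⋆Tᵢ‖ = ‖P⋆P‖ = ‖P‖²` by the C*-identity.
-/

namespace CFC

variable {A : Type*} [CStarAlgebra A] [PartialOrder A] [StarOrderedRing A]

lemma nnnorm_rpow_le (a : A) {r : ℝ} (hr : 0 ≤ r) : ‖a ^ r‖₊ ≤ ‖a‖₊ ^ r := by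
  nontriviality A
  exact nnnorm_cfc_nnreal_le fun _ hx ↦ NNReal.rpow_le_rpow (spectrum.le_nnnorm_of_mem hx) hr

lemma norm_rpow_le (a : A) {r : ℝ} (hr : 0 ≤ r) : ‖a ^ r‖ ≤ ‖a‖ ^ r :=
  NNReal.coe_le_coe.mpr (nnnorm_rpow_le a hr)

end CFC

section CStarAlgebra

variable {A : Type*} [CStarAlgebra A] [PartialOrder A] [StarOrderedRing A] {ι : Type*}
  (s : Finset ι)

lemma sum_star_left_conjugate_star_mul_self_le (a : A) {v : ι → A}
    (hv : ∑ i ∈ s, star (v i) * v i ≤ 1) :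
    ∑ i ∈ s, star (v i) * (star a * a) * v i ≤ (‖a‖ ^ 2) • 1 :=
  calc ∑ i ∈ s, star (v i) * (star a * a) * v i
      ≤ ∑ i ∈ s, (‖a‖ ^ 2) • (star (v i) * v i) := Finset.sum_le_sum fun i _ ↦ by
        simpa [Algebra.algebraMap_eq_smul_one, mul_smul_comm, smul_mul_assoc] using
          star_left_conjugate_le_conjugate CStarAlgebra.star_mul_le_algebraMap_norm_sq (v i)
    _ = (‖a‖ ^ 2) • ∑ i ∈ s, star (v i) * v i := (Finset.smul_sum ..).symm
    _ ≤ (‖a‖ ^ 2) • 1 := smul_le_smul_of_nonneg_left hv (sq_nonneg _)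

lemma sum_star_mul_self_mul_mul_le (a b : A) {v : ι → A}
    (hv : ∑ i ∈ s, star (v i) * v i ≤ 1) :
    ∑ i ∈ s, star (a * v i * b) * (a * v i * b) ≤ (‖a‖ ^ 2) • (star b * b) :=
  calc ∑ i ∈ s, star (a * v i * b) * (a * v i * b)
      = star b * (∑ i ∈ s, star (v i) * (star a * a) * v i) * b := by
        simp only [Finset.mul_sum, Finset.sum_mul, star_mul, mul_assoc]
    _ ≤ star b * ((‖a‖ ^ 2) • 1) * b :=
        star_left_conjugate_le_conjugate (sum_star_left_conjugate_star_mul_self_le s a hv) b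
    _ = (‖a‖ ^ 2) • (star b * b) := by rw [mul_smul_comm, mul_one, smul_mul_assoc]

lemma norm_sum_star_mul_self_mul_mul_le (a b : A) {v : ι → A}
    (hv : ∑ i ∈ s, star (v i) * v i ≤ 1) :
    ‖∑ i ∈ s, star (a * v i * b) * (a * v i * b)‖ ≤ ‖a‖ ^ 2 * ‖b‖ ^ 2 :=
  calc ‖∑ i ∈ s, star (a * v i * b) * (a * v i * b)‖
      ≤ ‖(‖a‖ ^ 2) • (star b * b)‖ :=
        CStarAlgebra.norm_le_norm_of_nonneg_of_le
          (Finset.sum_nonneg fun _ _ ↦ star_mul_self_nonneg _)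
          (sum_star_mul_self_mul_mul_le s a b hv)
    _ = ‖a‖ ^ 2 * ‖b‖ ^ 2 := by
        rw [norm_smul, CStarRing.norm_star_mul_self, Real.norm_of_nonneg (sq_nonneg _), sq ‖b‖]

end CStarAlgebra

theorem norm2_of_spherical_aluthge_le_general
    {H : Type*} [NormedAddCommGroup H] [InnerProductSpace ℂ H] [CompleteSpace H]
    {d : ℕ} (T V : Fin d → H →L[ℂ] H) (P : H →L[ℂ] H)
    (hPpos : 0 ≤ P)
    (hP2 : P * P = ∑ i, star (T i) * T i)
    (hproj : ∑ i, star (V i) * V i =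
      ((LinearMap.ker (P : H →ₗ[ℂ] H))ᗮ).subtypeL.comp
        (LinearMap.ker (P : H →ₗ[ℂ] H))ᗮ.orthogonalProjectionOnto)
    (t : ℝ) (ht0 : 0 < t) (ht1 : t ≤ 1) :
    ‖∑ i, star (CFC.rpow P t * V i * CFC.rpow P (1 - t)) *
        (CFC.rpow P t * V i * CFC.rpow P (1 - t))‖ ≤ ‖∑ i, star (T i) * T i‖ ∧
      ‖∑ i, star (T i) * T i‖ = ‖P‖ ^ 2 := by
  have hnorm : ‖∑ i, star (T i) * T i‖ = ‖P‖ ^ 2 := by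
    rw [← hP2, sq, ← CStarRing.norm_star_mul_self, (IsSelfAdjoint.of_nonneg hPpos).star_eq]
  have hV : ∑ i, star (V i) * V i ≤ 1 := by
    rw [hproj]
    exact isStarProjection_starProjection.le_one
  refine ⟨?_, hnorm⟩
  calc _ ≤ ‖P ^ t‖ ^ 2 * ‖P ^ (1 - t)‖ ^ 2 := norm_sum_star_mul_self_mul_mul_le _ _ _ hV
    _ ≤ (‖P‖ ^ t) ^ 2 * (‖P‖ ^ (1 - t)) ^ 2 := by
        gcongr
        exacts [CFC.norm_rpow_le P ht0.le, CFC.norm_rpow_le P (sub_nonneg.mpr ht1)]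
    _ = ‖∑ i, star (T i) * T i‖ := by
        rw [hnorm, ← mul_pow, ← Real.rpow_add' (norm_nonneg P) (by norm_num), add_sub_cancel,
          Real.rpow_one]

/-- For `0 < t ≤ 1`, `‖Δₜ(T)‖₂ ≤ ‖T‖₂`, in the squared form
`‖Σᵢ (Pᵗ Vᵢ P^{1-t})^* (Pᵗ Vᵢ P^{1-t})‖ ≤ ‖Σᵢ Tᵢ^* Tᵢ‖ = ‖P‖²`. -/
theorem norm2_of_spherical_aluthge_le
    {H : Type*} [NormedAddCommGroup H] [InnerProductSpace ℂ H] [CompleteSpace H]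
    {d : ℕ} (hd : 1 ≤ d) (T V : Fin d → H →L[ℂ] H) (P : H →L[ℂ] H)
    (hcomm : ∀ i j, T i * T j = T j * T i)
    (hPpos : 0 ≤ P)
    (hP2 : P * P = ∑ i, star (T i) * T i)
    (hpolar : ∀ i, T i = V i * P)
    (hproj : ∑ i, star (V i) * V i =
      ((LinearMap.ker (P : H →ₗ[ℂ] H))ᗮ).subtypeL.comp
        (LinearMap.ker (P : H →ₗ[ℂ] H))ᗮ.orthogonalProjectionOnto)
    (t : ℝ) (ht0 : 0 < t) (ht1 : t ≤ 1) :
    ‖∑ i, star (CFC.rpow P t * V i * CFC.rpow P (1 - t)) *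
        (CFC.rpow P t * V i * CFC.rpow P (1 - t))‖ ≤ ‖∑ i, star (T i) * T i‖ ∧
      ‖∑ i, star (T i) * T i‖ = ‖P‖ ^ 2 :=
  norm2_of_spherical_aluthge_le_general T V P hPpos hP2 hproj t ht0 ht1
end
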